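/- Let M > 0 and consider the 3×3 real matrix B_M = [[0, 2, 0], [−M, −M, 1], [2M, 0, −M]], the coefficient matrix of the linear system A_{2,0}' = 2A_{1,1}, A_{1,1}' = A_{0,2} − M A_{1,1} − M A_{2,0}, A_{0,2}' = 2M A_{2,0} − M A_{0,2} + 2M². If M > 2 then every eigenvalue of B_M has negative real part, while if 0 < M < 2 then B_M has at least one eigenvalue with positive real part. -/

import Mathlib

/-!
The characteristic polynomial of `B_M` is `z³ + 2M z² + M(M+2) z + 2M(M-2)`. For `M > 2` its
coefficients satisfy the Routh–Hurwitz conditions for a cubic `z³ + a z² + b z + c`, namely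
`a > 0`, `c > 0`, `ab > c`, which force every root into the open left half-plane. For
`0 < M < 2` the constant term is negative, so the monic cubic has a positive real root by the
intermediate value theorem.
-/

/-- The coefficient matrix of the second-order moment system of Model A,
unknowns ordered as `(A_{2,0}, A_{1,1}, A_{0,2})`. -/
noncomputable def BmatA (M : ℝ) : Matrix (Fin 3) (Fin 3) ℝ :=
  !![0, 2, 0; -M, -M, 1; 2 * M, 0, -M]

open Polynomial

theorem Polynomial.exists_pos_isRoot_of_eval_zero_neg {p : ℝ[X]} (hdeg : 0 < p.degree)
    (hlead : 0 ≤ p.leadingCoeff) (h0 : p.eval 0 < 0) : ∃ x, 0 < x ∧ p.IsRoot x := by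
  obtain ⟨x, hx, hroot⟩ := intermediate_value_Ici (a := 0) p.continuous.continuousOn
    (p.tendsto_atTop_of_leadingCoeff_nonneg hdeg hlead) (Set.mem_Ici.mpr h0.le)
  refine ⟨x, lt_of_le_of_ne hx ?_, hroot⟩
  rintro rfl
  exact h0.ne hroot

/-- Routh–Hurwitz criterion for cubics. -/
theorem Complex.re_neg_of_cubic_eq_zero {a b c : ℝ} (ha : 0 < a) (hc : 0 < c)
    (habc : c < a * b) {z : ℂ} (hz : z ^ 3 + a * z ^ 2 + b * z + c = 0) : z.re < 0 := by
  obtain ⟨x, y⟩ := z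
  have hre : x ^ 3 - 3 * x * y ^ 2 + a * (x ^ 2 - y ^ 2) + b * x + c = 0 := by
    have := congrArg Complex.re hz
    simp only [pow_succ, pow_zero, one_mul, add_re, mul_re, mul_im, ofReal_re, ofReal_im,
      zero_mul, sub_zero, zero_re] at this
    linear_combination this
  have him : y * (3 * x ^ 2 - y ^ 2 + 2 * a * x + b) = 0 := by
    have := congrArg Complex.im hz
    simp only [pow_succ, pow_zero, one_mul, add_im, mul_im, mul_re, ofReal_re, ofReal_im,
      zero_mul, add_zero, zero_im] at this
    linear_combination this
  have hb : 0 < b := pos_of_mul_pos_right (hc.trans habc) ha.le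
  by_contra! hx
  rcases mul_eq_zero.mp him with rfl | hy
  · nlinarith [pow_nonneg hx 3, mul_nonneg ha.le (pow_nonneg hx 2), mul_nonneg hb.le hx]
  · -- eliminating `y²` leaves a polynomial in `x` with positive coefficients
    have : 8 * x ^ 3 + 8 * a * x ^ 2 + 2 * (b + a ^ 2) * x + (a * b - c) = 0 := by
      linear_combination -hre + (3 * x + a) * hy
    nlinarith [pow_nonneg hx 3, mul_nonneg ha.le (pow_nonneg hx 2),
      mul_nonneg (by positivity : 0 ≤ b + a ^ 2) hx]

theorem charpoly_BmatA (M : ℝ) :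
    (BmatA M).charpoly = X ^ 3 + C (2 * M) * X ^ 2 + C (M * (M + 2)) * X + C (2 * M * (M - 2)) := by
  simp only [Matrix.charpoly, Matrix.det_fin_three, Matrix.charmatrix_apply, BmatA, Fin.isValue,
    Matrix.diagonal_apply_eq, Matrix.of_apply, Matrix.cons_val', Matrix.cons_val_zero,
    Matrix.cons_val_fin_one, map_zero, sub_zero, Matrix.cons_val_one, map_neg, sub_neg_eq_add,
    Matrix.cons_val, ne_eq, Fin.reduceEq, not_false_eq_true, Matrix.diagonal_apply_ne, map_one,
    zero_sub, mul_neg, mul_one, sub_self, mul_zero, zero_ne_one, map_ofNat C, one_ne_zero,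
    zero_add, neg_mul, neg_neg, map_mul, zero_mul, add_zero, neg_zero, map_add, map_sub]
  ring

/-- For `M > 2` every (complex) eigenvalue of `B_M` has negative real part, while for
`0 < M < 2` there is at least one eigenvalue with positive real part. -/
theorem BmatA_critical_mass (M : ℝ) :
    (2 < M → ∀ z : ℂ,
      (Matrix.charpoly ((BmatA M).map (Complex.ofReal))).IsRoot z → z.re < 0) ∧
    (0 < M → M < 2 → ∃ z : ℂ,
      (Matrix.charpoly ((BmatA M).map (Complex.ofReal))).IsRoot z ∧ 0 < z.re) := by
  have hmap : ((BmatA M).map Complex.ofReal).charpoly = (BmatA M).charpoly.map Complex.ofRealHom :=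
    Matrix.charpoly_map (BmatA M) Complex.ofRealHom
  refine ⟨fun hM z hz => ?_, fun hM₀ hM₂ => ?_⟩
  · rw [hmap, IsRoot, eval_map, charpoly_BmatA] at hz
    simp only [eval₂_add, eval₂_mul, eval₂_X_pow, eval₂_C, eval₂_X] at hz
    have hM₀ : 0 < M := by linarith
    refine Complex.re_neg_of_cubic_eq_zero (by positivity) (by nlinarith) ?_ hz
    nlinarith [mul_pos hM₀ (by positivity : 0 < M ^ 2 + M + 2)]
  · have hmonic := Matrix.charpoly_monic (BmatA M)
    have hdeg : 0 < (BmatA M).charpoly.degree := by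
      rw [degree_eq_natDegree hmonic.ne_zero, Matrix.charpoly_natDegree_eq_dim]
      simp
    have h0 : (BmatA M).charpoly.eval 0 = 2 * M * (M - 2) := by simp [charpoly_BmatA]
    obtain ⟨x, hx, hroot⟩ := exists_pos_isRoot_of_eval_zero_neg hdeg
      (hmonic.leadingCoeff ▸ zero_le_one) (by rw [h0]; nlinarith)
    exact ⟨x, hmap ▸ hroot.map, by simpa⟩
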